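/- Let (b_n, ∘) be a compatible anti-pre-Lie structure on b_n satisfying the grading conditions, and let α₁, γ_l, α_l (l ≥ 2) be the structure constants defined by z₁∘x = α₁x, x∘y = Σγ_l z_l, z₂∘x = α₂x (so x∘z₂ = (α₂+1)x), z_t∘x = α_t x for t ≥ 3. If α₁ = 0, then from y∘x = (γ₁−1)z₁ + Σ_{l≥2}γ_l z_l = 0 one gets γ₁ = 1 and γ_l = 0 for l ≥ 2, and then x∘(x∘y) = (γ₁(α₁−2) + γ₂(α₂+1) + Σ_{l≥3}γ_l α_l)x = −2x ≠ 0, contradicting that x is a highest weight vector of weight 0; hence α₁ ≠ 0. -/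
import Mathlib


/-- For a compatible anti-pre-Lie structure on `b_n` (`n ≥ 2`)
satisfying the grading conditions, the constant `α₁` defined by `z₁∘x = α₁x`
satisfies `α₁ ≠ 0`. -/
theorem stmt18 {g : Type*} [LieRing g] [LieAlgebra ℂ g]
    (n : ℕ) (hn : 2 ≤ n) (x y : g) (z : Fin n → g)
    (hindep : LinearIndependent ℂ (Sum.elim ![x, y] z))
    (hspan : Submodule.span ℂ (Set.range (Sum.elim ![x, y] z)) = ⊤)
    (z₁ z₂ : g) (hz₁ : z₁ = z ⟨0, by omega⟩) (hz₂ : z₂ = z ⟨1, by omega⟩)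
    (hb1 : ⁅z₁, x⁆ = (2 : ℂ) • x) (hb2 : ⁅z₁, y⁆ = (-2 : ℂ) • y) (hb3 : ⁅x, y⁆ = z₁)
    (hb4 : ⁅z₂, x⁆ = -x) (hb5 : ⁅z₂, y⁆ = y)
    (hb6 : ∀ i j : Fin n, ⁅z i, z j⁆ = 0)
    (hb7 : ∀ i : Fin n, 2 ≤ (i : ℕ) → ∀ a : g, ⁅z i, a⁆ = 0)
    (c : g →ₗ[ℂ] g →ₗ[ℂ] g)
    (hcompat : ∀ a b : g, c a b - c b a = ⁅a, b⁆)
    (hapl : ∀ a b d : g, c a (c b d) - c b (c a d) = c ⁅b, a⁆ d)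
    (hxy : c x y ∈ Submodule.span ℂ (Set.range z))
    (hyx : c y x ∈ Submodule.span ℂ (Set.range z))
    (hzx : ∀ i, c (z i) x ∈ Submodule.span ℂ {x})
    (hxz : ∀ i, c x (z i) ∈ Submodule.span ℂ {x})
    (hzy : ∀ i, c (z i) y ∈ Submodule.span ℂ {y})
    (hyz : ∀ i, c y (z i) ∈ Submodule.span ℂ {y})
    (hzz : ∀ i j, c (z i) (z j) ∈ Submodule.span ℂ (Set.range z))
    (hxx : c x x = 0) (hyy : c y y = 0) :
    ∀ α₁ : ℂ, c z₁ x = α₁ • x → α₁ ≠ 0 := by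
  intro α₁ hα hα0
  -- z₁ ≠ 0
  have hz1ne : z₁ ≠ 0 := by
    rw [hz₁]
    exact hindep.ne_zero (Sum.inr ⟨0, by omega⟩)
  have hz1x : c z₁ x = 0 := by rw [hα, hα0, zero_smul]
  have hyx' : ⁅y, x⁆ = -z₁ := by rw [← lie_skew, hb3]
  set w : g := c y x with hw
  set u : g := c x y with hu
  -- w = u - z₁
  have hwu : u - w = z₁ := by rw [hu, hw, hcompat x y, hb3]
  -- c x w = 0
  have hcxw : c x w = 0 := by
    have h := hapl x y x
    rw [hxx, map_zero, hyx', map_neg, LinearMap.neg_apply, hz1x, neg_zero, sub_zero] at h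
    exact h
  -- c y u = c z₁ y
  have hcyu : c y u = c z₁ y := by
    have h := hapl y x y
    rw [hyy, map_zero, hb3, sub_zero] at h
    exact h
  -- c y z₁
  have hcyz1 : c y z₁ = c z₁ y + (2 : ℂ) • y := by
    have h := hcompat z₁ y
    rw [hb2] at h
    have : c y z₁ = c z₁ y - (-2 : ℂ) • y := by linear_combination (norm := module) -h
    rw [this]; module
  -- c y w = -2 y
  have hcyw : c y w = (-2 : ℂ) • y := by
    have : w = u - z₁ := by rw [← hwu]; abel
    rw [this, map_sub, hcyu, hcyz1]
    module
  -- c z₁ w = 2 w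
  have h2w : c z₁ w = (2 : ℂ) • w := by
    have h := hapl y z₁ x
    rw [hz1x, map_zero, hb2, map_smul, LinearMap.smul_apply] at h
    have : (0 : g) - c z₁ w = (-2 : ℂ) • w := h
    linear_combination (norm := module) -this
  -- c z₁ w = 2 u
  have h2u : c z₁ w = (2 : ℂ) • u := by
    have h := hapl x y w
    rw [hcxw, map_zero, hcyw, map_smul, hyx', map_neg, LinearMap.neg_apply] at h
    have : (-2 : ℂ) • (c x y) - 0 = -(c z₁ w) := h
    linear_combination (norm := module) this
  -- hence 2 • (u - w) = 0, so z₁ = 0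
  have : (2 : ℂ) • (u - w) = 0 := by
    rw [smul_sub, ← h2u, ← h2w, sub_self]
  rw [hwu] at this
  rcases smul_eq_zero.mp this with h | h
  · norm_num at h
  · exact hz1ne h
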